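/- arXiv:2304.01707 — 4 statements merged into one kernel-verified Lean document; each statement's English description precedes it below -/
import Mathlib

section
/- Let b_0, …, b_N : Ω → ℝ take values in {0,1} and let z_0, …, z_N : Ω → ℝ^n have square-integrable components, and assume the 2(N+1) random elements b_0, …, b_N, z_0, …, z_N are mutually independent. Set p_j := E[b_j], m_j := E[z_j], and y := ∑_{j=0}^{N} b_j • z_j. Then the second-moment matrix satisfies E[y yᵀ] = ∑_{j=0}^{N} p_j · E[z_j z_jᵀ] + ∑_{s ≠ l} p_s p_l · m_s m_lᵀ. -/
/-!
Expanding `y yᵀ` entrywise gives the double sum `∑ⱼ ∑ₖ E[(bⱼ zⱼ)(bₖ zₖ)ᵀ]`. On the diagonal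
`bⱼ² = bⱼ` and `bⱼ ⟂ zⱼ` give `pⱼ E[zⱼ zⱼᵀ]`; off the diagonal the pairs `(bⱼ, zⱼ)` and `(bₖ, zₖ)`
are independent, and each factor `E[bⱼ zⱼ]` splits once more into `pⱼ mⱼ`.
-/

open MeasureTheory ProbabilityTheory Finset

theorem Finset.sum_sum_eq_sum_add_sum_sum_erase {ι M : Type*} [AddCommMonoid M] [DecidableEq ι]
    (s : Finset ι) (f : ι → ι → M) :
    ∑ j ∈ s, ∑ k ∈ s, f j k = ∑ j ∈ s, f j j + ∑ j ∈ s, ∑ k ∈ s.erase j, f j k := by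
  rw [← Finset.sum_add_distrib]
  exact Finset.sum_congr rfl fun j hj => (Finset.add_sum_erase s (f j) hj).symm

section

variable {Ω : Type*} [MeasurableSpace Ω] {P : Measure Ω}

theorem integral_sum_mul_sum {ι κ : Type*} (s : Finset ι) (t : Finset κ) {X : ι → Ω → ℝ}
    {Y : κ → Ω → ℝ} (hXY : ∀ j ∈ s, ∀ k ∈ t, Integrable (fun ω => X j ω * Y k ω) P) :
    ∫ ω, (∑ j ∈ s, X j ω) * (∑ k ∈ t, Y k ω) ∂P = ∑ j ∈ s, ∑ k ∈ t, ∫ ω, X j ω * Y k ω ∂P := by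
  simp_rw [Finset.sum_mul_sum]
  rw [integral_finsetSum _ fun j hj => integrable_finsetSum _ fun k hk => hXY j hj k hk]
  exact Finset.sum_congr rfl fun j hj => integral_finsetSum _ fun k hk => hXY j hj k hk

theorem MeasureTheory.MemLp.zero_or_one_mul {b x : Ω → ℝ} {p : ENNReal}
    (hb : AEStronglyMeasurable b P) (hb01 : ∀ ω, b ω = 0 ∨ b ω = 1) (hx : MemLp x p P) :
    MemLp (fun ω => b ω * x ω) p P :=
  hx.of_le (hb.mul hx.1) (ae_of_all _ fun ω => by rcases hb01 ω with h | h <;> simp [h])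

variable {E : Type*} [MeasurableSpace E]

theorem integral_mul_mul_of_zero_or_one {b : Ω → ℝ} {Z : Ω → E} {f g : E → ℝ}
    (hb01 : ∀ ω, b ω = 0 ∨ b ω = 1) (hbZ : IndepFun b Z P) (hb : Measurable b)
    (hZ : Measurable Z) (hf : Measurable f) (hg : Measurable g) :
    ∫ ω, b ω * f (Z ω) * (b ω * g (Z ω)) ∂P = (∫ ω, b ω ∂P) * ∫ ω, f (Z ω) * g (Z ω) ∂P := by
  have hidem :
      (fun ω => b ω * f (Z ω) * (b ω * g (Z ω))) = fun ω => b ω * (f (Z ω) * g (Z ω)) := by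
    funext ω
    rcases hb01 ω with h | h <;> simp [h]
  rw [hidem]
  exact (hbZ.comp measurable_id (hf.mul hg)).integral_fun_mul_eq_mul_integral
    hb.aestronglyMeasurable ((hf.mul hg).comp hZ).aestronglyMeasurable

theorem integral_mul_mul_of_indepFun_prodMk {b c : Ω → ℝ} {Z W : Ω → E} {f g : E → ℝ}
    (hbZ : IndepFun b Z P) (hcW : IndepFun c W P)
    (hpair : IndepFun (fun ω => (b ω, Z ω)) (fun ω => (c ω, W ω)) P)
    (hb : Measurable b) (hc : Measurable c) (hZ : Measurable Z) (hW : Measurable W)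
    (hf : Measurable f) (hg : Measurable g) :
    ∫ ω, b ω * f (Z ω) * (c ω * g (W ω)) ∂P
      = ((∫ ω, b ω ∂P) * ∫ ω, c ω ∂P) * ((∫ ω, f (Z ω) ∂P) * ∫ ω, g (W ω) ∂P) := by
  have hprod : IndepFun (fun ω => b ω * f (Z ω)) (fun ω => c ω * g (W ω)) P :=
    hpair.comp (measurable_fst.mul (hf.comp measurable_snd))
      (measurable_fst.mul (hg.comp measurable_snd))
  have hbf : ∫ ω, b ω * f (Z ω) ∂P = (∫ ω, b ω ∂P) * ∫ ω, f (Z ω) ∂P :=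
    (hbZ.comp measurable_id hf).integral_fun_mul_eq_mul_integral hb.aestronglyMeasurable
      (hf.comp hZ).aestronglyMeasurable
  have hcg : ∫ ω, c ω * g (W ω) ∂P = (∫ ω, c ω ∂P) * ∫ ω, g (W ω) ∂P :=
    (hcW.comp measurable_id hg).integral_fun_mul_eq_mul_integral hc.aestronglyMeasurable
      (hg.comp hW).aestronglyMeasurable
  rw [hprod.integral_fun_mul_eq_mul_integral (hb.mul (hf.comp hZ)).aestronglyMeasurable
      (hc.mul (hg.comp hW)).aestronglyMeasurable, hbf, hcg]
  ring

end

/-- second moment of the delayed measurement: if the `{0,1}`-valued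
indicators `b 0, …, b N` and the square-integrable measurements `z 0, …, z N` are
mutually independent (as a family of `2(N+1)` random elements), then, with
`p j = E[b j]`, `m j = E[z j]` and `y = ∑_j b_j • z_j`,
`E[y yᵀ] = ∑_j p_j E[z_j z_jᵀ] + ∑_{s ≠ l} p_s p_l m_s m_lᵀ`. -/
theorem secondMoment_delayed_measurement
    {Ω : Type*} [MeasurableSpace Ω] (P : Measure Ω) [IsProbabilityMeasure P]
    (n N : ℕ)
    (b : Fin (N + 1) → Ω → ℝ) (z : Fin (N + 1) → Ω → EuclideanSpace ℝ (Fin n))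
    (hbmeas : ∀ j, Measurable (b j))
    (hzmeas : ∀ j, Measurable (z j))
    (hval : ∀ j ω, b j ω = 0 ∨ b j ω = 1)
    (hz2 : ∀ j i, MemLp (fun ω => z j ω i) 2 P)
    (hindep : iIndepFun
      (m := fun s : Fin (N + 1) ⊕ Fin (N + 1) =>
        Sum.rec (motive := fun s =>
            MeasurableSpace (Sum.elim (fun _ => ℝ) (fun _ => EuclideanSpace ℝ (Fin n)) s))
          (fun _ => (inferInstance : MeasurableSpace ℝ))
          (fun _ => (inferInstance : MeasurableSpace (EuclideanSpace ℝ (Fin n)))) s)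
      (fun s => Sum.rec (motive := fun s =>
            Ω → Sum.elim (fun _ => ℝ) (fun _ => EuclideanSpace ℝ (Fin n)) s)
          b z s) P) :
    (Matrix.of fun i l : Fin n =>
        ∫ ω, (∑ j : Fin (N + 1), b j ω • z j ω) i * (∑ j : Fin (N + 1), b j ω • z j ω) l ∂P)
      = (∑ j : Fin (N + 1), (∫ ω, b j ω ∂P) •
            Matrix.of (fun i l : Fin n => ∫ ω, z j ω i * z j ω l ∂P))
        + ∑ s : Fin (N + 1), ∑ l ∈ Finset.univ.erase s,
            ((∫ ω, b s ω ∂P) * (∫ ω, b l ω ∂P)) •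
              Matrix.vecMulVec (fun i => (∫ ω, z s ω ∂P) i) (fun i => (∫ ω, z l ω ∂P) i) := by
  have hbz : ∀ j, IndepFun (b j) (z j) P := fun j =>
    hindep.indepFun (i := Sum.inl j) (j := Sum.inr j) Sum.inl_ne_inr
  have hpair : ∀ j k, j ≠ k →
      IndepFun (fun ω => (b j ω, z j ω)) (fun ω => (b k ω, z k ω)) P := fun j k hjk =>
    hindep.indepFun_prodMk_prodMk (by rintro (j | j); exacts [hbmeas j, hzmeas j])
      (Sum.inl j) (Sum.inr j) (Sum.inl k) (Sum.inr k) (by simpa) Sum.inl_ne_inr Sum.inr_ne_inl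
      (by simpa)
  have hproj : ∀ i : Fin n, Measurable fun v : EuclideanSpace ℝ (Fin n) => v i := by fun_prop
  have hmean : ∀ j i, (∫ ω, z j ω ∂P) i = ∫ ω, z j ω i ∂P := fun j =>
    eval_integral_piLp fun i => (hz2 j i).integrable one_le_two
  have hbz2 : ∀ j i, MemLp (fun ω => b j ω * z j ω i) 2 P := fun j i =>
    (hz2 j i).zero_or_one_mul (hbmeas j).aestronglyMeasurable (hval j)
  ext i l
  simp only [Matrix.of_apply, Matrix.add_apply, Matrix.sum_apply, Matrix.smul_apply,
    Matrix.vecMulVec_apply, smul_eq_mul, WithLp.ofLp_sum, WithLp.ofLp_smul, Finset.sum_apply,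
    Pi.smul_apply, hmean]
  rw [integral_sum_mul_sum _ _ fun j _ k _ => (hbz2 j i).integrable_mul (hbz2 k l),
    Finset.sum_sum_eq_sum_add_sum_sum_erase]
  congr 1
  · exact Finset.sum_congr rfl fun j _ =>
      integral_mul_mul_of_zero_or_one (hval j) (hbz j) (hbmeas j) (hzmeas j) (hproj i) (hproj l)
  · exact Finset.sum_congr rfl fun j _ => Finset.sum_congr rfl fun k hk =>
      integral_mul_mul_of_indepFun_prodMk (hbz j) (hbz k)
        (hpair j k (Finset.ne_of_mem_erase hk).symm) (hbmeas j) (hbmeas k) (hzmeas j) (hzmeas k)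
        (hproj i) (hproj l)
end

section
/- Let b_0, …, b_N : Ω → ℝ take values in {0,1} and let z_0, …, z_N : Ω → ℝ^n have square-integrable components, and assume the 2(N+1) random elements b_0, …, b_N, z_0, …, z_N are mutually independent. Set p_j := E[b_j], m_j := E[z_j], and y := ∑_{j=0}^{N} b_j • z_j. Then the covariance matrix of y satisfies Cov(y) = ∑_{j=0}^{N} p_j · Cov(z_j) + ∑_{j=0}^{N} p_j (1 − p_j) · m_j m_jᵀ. -/
/-!
Coordinatewise, `Cov(y)ᵢₗ = ∑_{j,k} cov(b_j z_{j,i}, b_k z_{k,l})`. For `j ≠ k` the pairs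
`(b_j, z_j)` and `(b_k, z_k)` are independent, so these terms vanish. For `j = k`, `b_j² = b_j`
and the independence of `b_j` from `z_j` give `E[b_j z_{j,i} · b_j z_{j,l}] = p_j E[z_{j,i} z_{j,l}]`
and `E[b_j z_{j,i}] = p_j m_{j,i}`, which rearranges to
`p_j Cov(z_j)ᵢₗ + p_j (1 - p_j) m_{j,i} m_{j,l}`.
-/

open MeasureTheory ProbabilityTheory Finset

noncomputable def covMatrix {Ω : Type*} [MeasurableSpace Ω] (P : Measure Ω) {n : ℕ}
    (u : Ω → EuclideanSpace ℝ (Fin n)) : Matrix (Fin n) (Fin n) ℝ :=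
  Matrix.of fun i l : Fin n =>
    ∫ ω, (u ω i - (∫ ω', u ω' ∂P) i) * (u ω l - (∫ ω', u ω' ∂P) l) ∂P

section

variable {Ω : Type*} [MeasurableSpace Ω] {μ : Measure Ω}

lemma covMatrix_apply {n : ℕ} {u : Ω → EuclideanSpace ℝ (Fin n)}
    (hu : ∀ i, Integrable (fun ω => u ω i) μ) (i l : Fin n) :
    covMatrix μ u i l = cov[fun ω => u ω i, fun ω => u ω l; μ] := by
  simp [covMatrix, covariance, eval_integral_piLp hu]

lemma MeasureTheory.MemLp.mul_of_abs_le_one {p : ENNReal} {b X : Ω → ℝ} (hX : MemLp X p μ)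
    (hb : AEStronglyMeasurable b μ) (hb_le : ∀ ω, |b ω| ≤ 1) :
    MemLp (fun ω => b ω * X ω) p μ :=
  hX.of_le (hb.mul hX.1) <| ae_of_all _ fun ω => by
    simpa [abs_mul] using mul_le_of_le_one_left (abs_nonneg _) (hb_le ω)

lemma covariance_fun_sum_fun_sum_of_indepFun [IsFiniteMeasure μ] {ι : Type*} [Fintype ι]
    {X Y : ι → Ω → ℝ} (hX : ∀ j, MemLp (X j) 2 μ) (hY : ∀ j, MemLp (Y j) 2 μ)
    (hXY : ∀ j k, j ≠ k → IndepFun (X j) (Y k) μ) :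
    cov[fun ω => ∑ j, X j ω, fun ω => ∑ j, Y j ω; μ] = ∑ j, cov[X j, Y j; μ] := by
  rw [covariance_fun_sum_fun_sum hX hY]
  refine Finset.sum_congr rfl fun j _ => Finset.sum_eq_single j (fun k _ hkj => ?_) (by simp)
  exact (hXY j k hkj.symm).covariance_eq_zero (hX j) (hY k)

lemma covariance_mul_mul_of_indepFun [IsProbabilityMeasure μ] {b X Y : Ω → ℝ}
    (hb : ∀ ω, b ω = 0 ∨ b ω = 1) (hb_meas : AEStronglyMeasurable b μ)
    (hX : MemLp X 2 μ) (hY : MemLp Y 2 μ) (hind : IndepFun b (fun ω => (X ω, Y ω)) μ) :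
    cov[fun ω => b ω * X ω, fun ω => b ω * Y ω; μ]
      = μ[b] * cov[X, Y; μ] + μ[b] * (1 - μ[b]) * (μ[X] * μ[Y]) := by
  have hb_le : ∀ ω, |b ω| ≤ 1 := fun ω => by rcases hb ω with h | h <;> simp [h]
  have hXY_meas : AEStronglyMeasurable (fun ω => (X ω, Y ω)) μ :=
    hX.aestronglyMeasurable.prodMk hY.aestronglyMeasurable
  have mean_mul : ∀ {φ : ℝ × ℝ → ℝ}, Measurable φ →
      ∫ ω, b ω * φ (X ω, Y ω) ∂μ = μ[b] * ∫ ω, φ (X ω, Y ω) ∂μ := fun hφ =>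
    (hind.comp measurable_id hφ).integral_mul_eq_mul_integral hb_meas
      (hφ.comp_aemeasurable hXY_meas.aemeasurable).aestronglyMeasurable
  have hbXY : ∫ ω, b ω * (X ω * Y ω) ∂μ = μ[b] * ∫ ω, X ω * Y ω ∂μ :=
    mean_mul (φ := fun p => p.1 * p.2) (by fun_prop)
  have hbX : ∫ ω, b ω * X ω ∂μ = μ[b] * μ[X] := mean_mul (φ := Prod.fst) measurable_fst
  have hbY : ∫ ω, b ω * Y ω ∂μ = μ[b] * μ[Y] := mean_mul (φ := Prod.snd) measurable_snd
  have hbb : (fun ω => b ω * X ω) * (fun ω => b ω * Y ω) = fun ω => b ω * (X ω * Y ω) := by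
    ext ω
    rcases hb ω with h | h <;> simp [h]
  rw [covariance_eq_sub (hX.mul_of_abs_le_one hb_meas hb_le) (hY.mul_of_abs_le_one hb_meas hb_le),
    covariance_eq_sub hX hY, hbb, hbXY, hbX, hbY]
  simp only [Pi.mul_apply]
  ring

end

section SumIndex

universe u

variable {Ω ι : Type*} {β γ : Type u} [MeasurableSpace Ω] {μ : Measure Ω} [MeasurableSpace β]
  [MeasurableSpace γ] {f : ι → Ω → β} {g : ι → Ω → γ}

lemma ProbabilityTheory.iIndepFun.indepFun_sumRec_inl_inr
    (h : iIndepFun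
      (m := fun s : ι ⊕ ι =>
        Sum.rec (motive := fun s => MeasurableSpace (Sum.elim (fun _ => β) (fun _ => γ) s))
          (fun _ => (inferInstance : MeasurableSpace β))
          (fun _ => (inferInstance : MeasurableSpace γ)) s)
      (fun s => Sum.rec (motive := fun s => Ω → Sum.elim (fun _ => β) (fun _ => γ) s) f g s) μ)
    (j : ι) : IndepFun (f j) (g j) μ :=
  h.indepFun Sum.inl_ne_inr

lemma ProbabilityTheory.iIndepFun.indepFun_sumRec_prodMk
    (h : iIndepFun
      (m := fun s : ι ⊕ ι =>
        Sum.rec (motive := fun s => MeasurableSpace (Sum.elim (fun _ => β) (fun _ => γ) s))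
          (fun _ => (inferInstance : MeasurableSpace β))
          (fun _ => (inferInstance : MeasurableSpace γ)) s)
      (fun s => Sum.rec (motive := fun s => Ω → Sum.elim (fun _ => β) (fun _ => γ) s) f g s) μ)
    (hf : ∀ j, Measurable (f j)) (hg : ∀ j, Measurable (g j)) {j k : ι} (hjk : j ≠ k) :
    IndepFun (fun ω => (f j ω, g j ω)) (fun ω => (f k ω, g k ω)) μ :=
  h.indepFun_prodMk_prodMk (Sum.rec hf hg) (.inl j) (.inr j) (.inl k) (.inr k)
    (by simpa using hjk) Sum.inl_ne_inr Sum.inr_ne_inl (by simpa using hjk)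

end SumIndex

lemma EuclideanSpace.sum_smul_apply {ι : Type*} {n : ℕ} (s : Finset ι) (c : ι → ℝ)
    (v : ι → EuclideanSpace ℝ (Fin n)) (i : Fin n) :
    (∑ j ∈ s, c j • v j) i = ∑ j ∈ s, c j * v j i := by
  simp

/-- predicted measurement covariance, Lemma 3 of the paper: if the
`{0,1}`-valued indicators `b 0, …, b N` and the square-integrable measurements
`z 0, …, z N` are mutually independent, then, with `p j = E[b j]`, `m j = E[z j]` and
`y = ∑_j b_j • z_j`,
`Cov(y) = ∑_j p_j Cov(z_j) + ∑_j p_j (1 - p_j) m_j m_jᵀ`. -/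
theorem covariance_delayed_measurement
    {Ω : Type*} [MeasurableSpace Ω] (P : Measure Ω) [IsProbabilityMeasure P]
    (n N : ℕ)
    (b : Fin (N + 1) → Ω → ℝ) (z : Fin (N + 1) → Ω → EuclideanSpace ℝ (Fin n))
    (hbmeas : ∀ j, Measurable (b j))
    (hzmeas : ∀ j, Measurable (z j))
    (hval : ∀ j ω, b j ω = 0 ∨ b j ω = 1)
    (hz2 : ∀ j i, MemLp (fun ω => z j ω i) 2 P)
    (hindep : iIndepFun
      (m := fun s : Fin (N + 1) ⊕ Fin (N + 1) =>
        Sum.rec (motive := fun s =>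
            MeasurableSpace (Sum.elim (fun _ => ℝ) (fun _ => EuclideanSpace ℝ (Fin n)) s))
          (fun _ => (inferInstance : MeasurableSpace ℝ))
          (fun _ => (inferInstance : MeasurableSpace (EuclideanSpace ℝ (Fin n)))) s)
      (fun s => Sum.rec (motive := fun s =>
            Ω → Sum.elim (fun _ => ℝ) (fun _ => EuclideanSpace ℝ (Fin n)) s)
          b z s) P) :
    covMatrix P (fun ω => ∑ j : Fin (N + 1), b j ω • z j ω)
      = (∑ j : Fin (N + 1), (∫ ω, b j ω ∂P) • covMatrix P (z j))
        + ∑ j : Fin (N + 1),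
            ((∫ ω, b j ω ∂P) * (1 - ∫ ω, b j ω ∂P)) •
              Matrix.vecMulVec (fun i => (∫ ω, z j ω ∂P) i) (fun i => (∫ ω, z j ω ∂P) i) := by
  have hb_le : ∀ j ω, |b j ω| ≤ 1 := fun j ω => by rcases hval j ω with h | h <;> simp [h]
  have hbz2 : ∀ j i, MemLp (fun ω => b j ω * z j ω i) 2 P := fun j i =>
    (hz2 j i).mul_of_abs_le_one (hbmeas j).aestronglyMeasurable (hb_le j)
  have hz1 : ∀ j i, Integrable (fun ω => z j ω i) P := fun j i => (hz2 j i).integrable one_le_two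
  have hproj : ∀ i : Fin n, Measurable fun v : EuclideanSpace ℝ (Fin n) => v i := fun i =>
    (EuclideanSpace.proj (𝕜 := ℝ) i).continuous.measurable
  have hy1 : ∀ i, Integrable (fun ω => (∑ j, b j ω • z j ω) i) P := fun i => by
    simpa only [EuclideanSpace.sum_smul_apply] using
      integrable_finsetSum _ fun j _ => (hbz2 j i).integrable one_le_two
  ext i l
  rw [covMatrix_apply hy1]
  simp only [EuclideanSpace.sum_smul_apply]
  rw [covariance_fun_sum_fun_sum_of_indepFun (fun j => hbz2 j i) (fun j => hbz2 j l)
    fun j k hjk => (hindep.indepFun_sumRec_prodMk hbmeas hzmeas hjk).comp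
      (measurable_fst.mul ((hproj i).comp measurable_snd))
      (measurable_fst.mul ((hproj l).comp measurable_snd))]
  rw [Finset.sum_congr rfl fun j _ => covariance_mul_mul_of_indepFun (hval j)
    (hbmeas j).aestronglyMeasurable (hz2 j i) (hz2 j l)
    ((hindep.indepFun_sumRec_inl_inr j).comp measurable_id ((hproj i).prodMk (hproj l)))]
  simp only [Matrix.add_apply, Matrix.sum_apply, Matrix.smul_apply, Matrix.vecMulVec_apply,
    smul_eq_mul, covMatrix_apply (hz1 _), eval_integral_piLp (hz1 _), Finset.sum_add_distrib]
end

section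
/- Let x : Ω → ℝ^m and z_0, …, z_N : Ω → ℝ^n have square-integrable components, let b_0, …, b_N : Ω → ℝ take values in {0,1}, and assume that for each j the variable b_j is independent of the pair (x, z_j). Set p_j := E[b_j] and y := ∑_{j=0}^{N} b_j • z_j. Then the cross-covariance satisfies E[(x − E x)(y − E y)ᵀ] = ∑_{j=0}^{N} p_j · E[(x − E x)(z_j − E z_j)ᵀ]. -/
/-!
Entrywise, the cross-covariance is the covariance of the coordinates, which is bilinear.
For `b` independent of the pair `(X, Z)` the factor `b` splits off both `E[X b Z]` and
`E[b Z]`, so `cov[X, b Z] = E[b] cov[X, Z]`.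
-/

open MeasureTheory ProbabilityTheory Finset

/-- The cross-covariance matrix `E[(u - E u)(w - E w)ᵀ]` of random vectors
`u : Ω → ℝ^m` and `w : Ω → ℝ^n`. -/
noncomputable def crossCovMatrix {Ω : Type*} [MeasurableSpace Ω] (P : Measure Ω) {m n : ℕ}
    (u : Ω → EuclideanSpace ℝ (Fin m)) (w : Ω → EuclideanSpace ℝ (Fin n)) :
    Matrix (Fin m) (Fin n) ℝ :=
  Matrix.of fun i l =>
    ∫ ω, (u ω i - (∫ ω', u ω' ∂P) i) * (w ω l - (∫ ω', w ω' ∂P) l) ∂P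

open scoped ENNReal

lemma crossCovMatrix_apply {Ω : Type*} [MeasurableSpace Ω] {P : Measure Ω} {m n : ℕ}
    {u : Ω → EuclideanSpace ℝ (Fin m)} {w : Ω → EuclideanSpace ℝ (Fin n)}
    (hu : ∀ i, Integrable (u · i) P) (hw : ∀ l, Integrable (w · l) P) (i : Fin m) (l : Fin n) :
    crossCovMatrix P u w i l = cov[(u · i), (w · l); P] := by
  simp only [crossCovMatrix, Matrix.of_apply, covariance, eval_integral_piLp hu,
    eval_integral_piLp hw]

namespace ProbabilityTheory.IndepFun

variable {Ω : Type*} [MeasurableSpace Ω] {μ : Measure Ω} [IsProbabilityMeasure μ]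
  {b X Z : Ω → ℝ}

lemma covariance_mul_right (h : IndepFun b (fun ω => (X ω, Z ω)) μ) (hb : MemLp b ∞ μ)
    (hX : MemLp X 2 μ) (hZ : MemLp Z 2 μ) :
    cov[X, fun ω => b ω * Z ω; μ] = μ[b] * cov[X, Z; μ] := by
  have hbZ : MemLp (fun ω => b ω * Z ω) 2 μ := hZ.mul' hb
  have hindep_Z : IndepFun b Z μ := h.comp measurable_id measurable_snd
  have hindep_XZ : IndepFun b (X * Z) μ := h.comp measurable_id (measurable_fst.mul measurable_snd)
  have hXbZ : X * (fun ω => b ω * Z ω) = b * (X * Z) := by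
    ext ω; simp only [Pi.mul_apply]; ring
  rw [covariance_eq_sub hX hbZ, covariance_eq_sub hX hZ, hXbZ,
    hindep_XZ.integral_mul_eq_mul_integral hb.1 (hX.integrable_mul hZ).1,
    hindep_Z.integral_fun_mul_eq_mul_integral hb.1 hZ.1]
  ring

end ProbabilityTheory.IndepFun

theorem crossCovariance_delayed_measurement_general
    {Ω : Type*} [MeasurableSpace Ω] (P : Measure Ω) [IsProbabilityMeasure P]
    (m n N : ℕ)
    (x : Ω → EuclideanSpace ℝ (Fin m))
    (b : Fin (N + 1) → Ω → ℝ) (z : Fin (N + 1) → Ω → EuclideanSpace ℝ (Fin n))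
    (hbmeas : ∀ j, Measurable (b j))
    (hval : ∀ j ω, b j ω = 0 ∨ b j ω = 1)
    (hx2 : ∀ i, MemLp (fun ω => x ω i) 2 P)
    (hz2 : ∀ j i, MemLp (fun ω => z j ω i) 2 P)
    (hindep : ∀ j, IndepFun (b j) (fun ω => (x ω, z j ω)) P) :
    crossCovMatrix P x (fun ω => ∑ j : Fin (N + 1), b j ω • z j ω)
      = ∑ j : Fin (N + 1), (∫ ω, b j ω ∂P) • crossCovMatrix P x (z j) := by
  have hb : ∀ j, MemLp (b j) ∞ P := fun j =>
    memLp_top_of_bound (hbmeas j).aestronglyMeasurable 1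
      (ae_of_all _ fun ω => by rcases hval j ω with h | h <;> simp [h])
  have hbz : ∀ j l, MemLp (fun ω => b j ω * z j ω l) 2 P := fun j l => (hz2 j l).mul' (hb j)
  have hy_apply : ∀ l, (fun ω => (∑ j, b j ω • z j ω) l) = fun ω => ∑ j, b j ω * z j ω l := by
    intro l; ext ω; simp
  have hx_int : ∀ i, Integrable (fun ω => x ω i) P := fun i => (hx2 i).integrable one_le_two
  have hy_int : ∀ l, Integrable (fun ω => (∑ j, b j ω • z j ω) l) P := fun l => by
    rw [hy_apply]; exact integrable_finsetSum _ fun j _ => (hbz j l).integrable one_le_two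
  ext i l
  rw [crossCovMatrix_apply hx_int hy_int, hy_apply,
    covariance_fun_sum_right (fun j => hbz j l) (hx2 i), Matrix.sum_apply]
  refine Finset.sum_congr rfl fun j _ => ?_
  rw [Matrix.smul_apply, crossCovMatrix_apply hx_int (fun l => (hz2 j l).integrable one_le_two),
    smul_eq_mul]
  have hcoord : Measurable fun p : EuclideanSpace ℝ (Fin m) × EuclideanSpace ℝ (Fin n) =>
      (p.1 i, p.2 l) := by fun_prop
  exact ((hindep j).comp measurable_id hcoord).covariance_mul_right (hb j) (hx2 i) (hz2 j l)

/-- state–measurement cross-covariance, Lemma 4 of the paper: if each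
`{0,1}`-valued indicator `b j` is independent of the pair `(x, z j)`, then, with
`p j = E[b j]` and `y = ∑_j b_j • z_j`,
`E[(x - E x)(y - E y)ᵀ] = ∑_j p_j E[(x - E x)(z_j - E z_j)ᵀ]`. -/
theorem crossCovariance_delayed_measurement
    {Ω : Type*} [MeasurableSpace Ω] (P : Measure Ω) [IsProbabilityMeasure P]
    (m n N : ℕ)
    (x : Ω → EuclideanSpace ℝ (Fin m))
    (b : Fin (N + 1) → Ω → ℝ) (z : Fin (N + 1) → Ω → EuclideanSpace ℝ (Fin n))
    (hxmeas : Measurable x)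
    (hbmeas : ∀ j, Measurable (b j))
    (hzmeas : ∀ j, Measurable (z j))
    (hval : ∀ j ω, b j ω = 0 ∨ b j ω = 1)
    (hx2 : ∀ i, MemLp (fun ω => x ω i) 2 P)
    (hz2 : ∀ j i, MemLp (fun ω => z j ω i) 2 P)
    (hindep : ∀ j, IndepFun (b j) (fun ω => (x ω, z j ω)) P) :
    crossCovMatrix P x (fun ω => ∑ j : Fin (N + 1), b j ω • z j ω)
      = ∑ j : Fin (N + 1), (∫ ω, b j ω ∂P) • crossCovMatrix P x (z j) :=
  crossCovariance_delayed_measurement_general P m n N x b z hbmeas hval hx2 hz2 hindep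
end

section
/- Fix N ∈ ℕ and k, m ≥ N with k ≠ m. Let α : ℕ → ℕ → Ω → ℝ be measurable random variables taking values in {0,1}, and let v : ℕ → Ω → ℝ^n be random vectors with square-integrable components such that E[v_p] = 0 for all p and E[v_p v_qᵀ] = 0 (the zero n×n matrix) for all p ≠ q. Assume the σ-algebra generated by the whole family {α a b} is independent of the σ-algebra generated by the whole family {v_p}. Define β k j := (α k j) · ∏_{i=1}^{j} (1 − α (k-i) (j-i)) and ν_k := ∑_{j=0}^{N} β k j • v_{k−j}. Then the modified noise sequence is uncorrelated across time: E[ν_k ν_mᵀ] = 0 (the zero n×n matrix). -/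
/-!
Expanding both sums, independence of `α` from `v` factors each term of `E[ν_k ν_mᵀ]` into
`E[β k j β m j'] E[v_{k-j} v_{m-j'}ᵀ]`. The second factor vanishes unless `k - j = m - j'`; in that
case, say `k < m`, the product `β m j'` contains the factor `1 - α k j` (take `i = m - k`), so a
measurement received at time `k` is never received again and `β k j β m j' = 0`.
-/

open MeasureTheory ProbabilityTheory Finset

/-- The delay indicator `β k j = α k j ∏_{i=1}^j (1 - α (k-i) (j-i))`. -/
noncomputable def delayIndicator {Ω : Type*} (α : ℕ → ℕ → Ω → ℝ) (k j : ℕ) (ω : Ω) : ℝ :=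
  α k j ω * ∏ i ∈ Finset.Icc 1 j, (1 - α (k - i) (j - i) ω)

/-- The matrix of second cross moments `E[u wᵀ]` of random vectors `u, w : Ω → ℝ^n`. -/
noncomputable def secondMomentMatrix {Ω : Type*} [MeasurableSpace Ω] (P : Measure Ω)
    {n : ℕ} (u w : Ω → EuclideanSpace ℝ (Fin n)) : Matrix (Fin n) (Fin n) ℝ :=
  Matrix.of fun i l : Fin n => ∫ ω, u ω i * w ω l ∂P

/-- The modified measurement noise `ν_k = ∑_{j=0}^N β k j • v_{k-j}` of the
delayed-measurement model. -/
noncomputable def modifiedNoise {Ω : Type*} (α : ℕ → ℕ → Ω → ℝ)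
    {n : ℕ} (v : ℕ → Ω → EuclideanSpace ℝ (Fin n)) (N k : ℕ) (ω : Ω) :
    EuclideanSpace ℝ (Fin n) :=
  ∑ j ∈ Finset.range (N + 1), delayIndicator α k j ω • v (k - j) ω

section SecondMoment

variable {Ω : Type*} {m₁ m₂ mΩ : MeasurableSpace Ω} {P : Measure Ω} {n : ℕ}

theorem secondMomentMatrix_sum_sum {ι κ : Type*} (s : Finset ι) (t : Finset κ)
    (u : ι → Ω → EuclideanSpace ℝ (Fin n)) (w : κ → Ω → EuclideanSpace ℝ (Fin n))
    (h : ∀ i ∈ s, ∀ j ∈ t, ∀ a b, Integrable (fun ω => u i ω a * w j ω b) P) :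
    secondMomentMatrix P (fun ω => ∑ i ∈ s, u i ω) (fun ω => ∑ j ∈ t, w j ω)
      = ∑ i ∈ s, ∑ j ∈ t, secondMomentMatrix P (u i) (w j) := by
  ext a b
  simp only [secondMomentMatrix, Matrix.of_apply, Matrix.sum_apply, WithLp.ofLp_sum,
    Finset.sum_apply, Finset.sum_mul_sum]
  rw [integral_finsetSum _ fun i hi => integrable_finsetSum _ fun j hj => h i hi j hj a b]
  exact Finset.sum_congr rfl fun i hi => integral_finsetSum _ fun j hj => h i hi j hj a b

theorem secondMomentMatrix_smul_smul_of_indep (hm₁ : m₁ ≤ mΩ) (hm₂ : m₂ ≤ mΩ)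
    (hind : Indep m₁ m₂ P) {a b : Ω → ℝ} {u w : Ω → EuclideanSpace ℝ (Fin n)}
    (ha : Measurable[m₁] a) (hb : Measurable[m₁] b)
    (hu : Measurable[m₂] u) (hw : Measurable[m₂] w) :
    secondMomentMatrix P (fun ω => a ω • u ω) (fun ω => b ω • w ω)
      = (∫ ω, a ω * b ω ∂P) • secondMomentMatrix P u w := by
  ext i l
  have hab : Measurable[m₁] (a * b) := ha.mul hb
  have huw : Measurable[m₂] (fun ω => u ω i * w ω l) :=
    ((EuclideanSpace.proj i).continuous.measurable.comp hu).mul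
      ((EuclideanSpace.proj l).continuous.measurable.comp hw)
  have hindep : IndepFun (a * b) (fun ω => u ω i * w ω l) P :=
    indep_of_indep_of_le_right (indep_of_indep_of_le_left hind hab.comap_le) huw.comap_le
  simp only [secondMomentMatrix, Matrix.of_apply, Matrix.smul_apply, smul_eq_mul,
    PiLp.smul_apply]
  calc ∫ ω, a ω * u ω i * (b ω * w ω l) ∂P
      = ∫ ω, (a * b) ω * (u ω i * w ω l) ∂P := by
        congr 1 with ω; simp only [Pi.mul_apply]; ring
    _ = _ := hindep.integral_mul_eq_mul_integral
        ((hab.mono hm₁ le_rfl).aestronglyMeasurable) ((huw.mono hm₂ le_rfl).aestronglyMeasurable)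

theorem secondMomentMatrix_sum_smul_sum_smul_of_indep {ι κ : Type*}
    (hm₁ : m₁ ≤ mΩ) (hm₂ : m₂ ≤ mΩ) (hind : Indep m₁ m₂ P) (s : Finset ι) (t : Finset κ)
    {a : ι → Ω → ℝ} {b : κ → Ω → ℝ}
    {u : ι → Ω → EuclideanSpace ℝ (Fin n)} {w : κ → Ω → EuclideanSpace ℝ (Fin n)}
    (ha : ∀ i, Measurable[m₁] (a i)) (hb : ∀ j, Measurable[m₁] (b j))
    {C D : ℝ} (ha_bdd : ∀ i ω, ‖a i ω‖ ≤ C) (hb_bdd : ∀ j ω, ‖b j ω‖ ≤ D)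
    (hu : ∀ i, Measurable[m₂] (u i)) (hw : ∀ j, Measurable[m₂] (w j))
    (hu2 : ∀ i c, MemLp (fun ω => u i ω c) 2 P) (hw2 : ∀ j c, MemLp (fun ω => w j ω c) 2 P) :
    secondMomentMatrix P (fun ω => ∑ i ∈ s, a i ω • u i ω) (fun ω => ∑ j ∈ t, b j ω • w j ω)
      = ∑ i ∈ s, ∑ j ∈ t, (∫ ω, a i ω * b j ω ∂P) • secondMomentMatrix P (u i) (w j) := by
  rw [secondMomentMatrix_sum_sum s t (fun i ω => a i ω • u i ω) (fun j ω => b j ω • w j ω)]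
  · exact Finset.sum_congr rfl fun i _ => Finset.sum_congr rfl fun j _ =>
      secondMomentMatrix_smul_smul_of_indep hm₁ hm₂ hind (ha i) (hb j) (hu i) (hw j)
  intro i _ j _ c d
  have hab : AEStronglyMeasurable (fun ω => a i ω * b j ω) P :=
    (((ha i).mul (hb j)).mono hm₁ le_rfl).aestronglyMeasurable
  have huw : Integrable (fun ω => u i ω c * w j ω d) P := (hu2 i c).integrable_mul (hw2 j d)
  refine (huw.bdd_mul hab (c := C * D) (ae_of_all _ fun ω => ?_)).congr
    (ae_of_all _ fun ω => ?_)
  · rw [norm_mul]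
    exact mul_le_mul (ha_bdd i ω) (hb_bdd j ω) (norm_nonneg _) ((norm_nonneg _).trans (ha_bdd i ω))
  · simp only [PiLp.smul_apply, smul_eq_mul]
    ring

end SecondMoment

section DelayIndicator

variable {Ω : Type*} {α : ℕ → ℕ → Ω → ℝ}

theorem delayIndicator_eq_zero_or_one (hval : ∀ a b ω, α a b ω = 0 ∨ α a b ω = 1)
    (k j : ℕ) (ω : Ω) : delayIndicator α k j ω = 0 ∨ delayIndicator α k j ω = 1 := by
  unfold delayIndicator
  rcases hval k j ω with h | h
  · left; rw [h, zero_mul]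
  · rw [h, one_mul]
    refine Finset.prod_induction _ (fun x => x = 0 ∨ x = 1) ?_ (Or.inr rfl) ?_
    · rintro x y (hx | hx) (hy | hy) <;> simp [hx, hy]
    · intro i _
      rcases hval (k - i) (j - i) ω with h' | h' <;> simp [h']

theorem norm_delayIndicator_le_one (hval : ∀ a b ω, α a b ω = 0 ∨ α a b ω = 1)
    (k j : ℕ) (ω : Ω) : ‖delayIndicator α k j ω‖ ≤ 1 := by
  rcases delayIndicator_eq_zero_or_one hval k j ω with h | h <;> simp [h]

theorem Measurable.delayIndicator {mΩ : MeasurableSpace Ω} (hα : ∀ a b, Measurable (α a b))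
    (k j : ℕ) : Measurable (delayIndicator α k j) :=
  (hα k j).mul (Finset.measurable_prod _ fun _ _ => measurable_const.sub (hα _ _))

theorem delayIndicator_mul_delayIndicator_eq_zero_of_lt
    (hval : ∀ a b ω, α a b ω = 0 ∨ α a b ω = 1) {k m j j' : ℕ} (hjk : j ≤ k) (hj'm : j' ≤ m)
    (hkm : k < m) (heq : k - j = m - j') (ω : Ω) :
    delayIndicator α k j ω * delayIndicator α m j' ω = 0 := by
  have hd : m - k ∈ Finset.Icc 1 j' := by
    rw [Finset.mem_Icc]; omega
  unfold delayIndicator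
  rw [← Finset.prod_erase_mul _ _ hd, show m - (m - k) = k by omega,
    show j' - (m - k) = j by omega]
  rcases hval k j ω with h | h <;> rw [h] <;> ring

theorem delayIndicator_mul_delayIndicator_eq_zero
    (hval : ∀ a b ω, α a b ω = 0 ∨ α a b ω = 1) {k m j j' : ℕ} (hjk : j ≤ k) (hj'm : j' ≤ m)
    (hkm : k ≠ m) (heq : k - j = m - j') (ω : Ω) :
    delayIndicator α k j ω * delayIndicator α m j' ω = 0 := by
  rcases hkm.lt_or_gt with h | h
  · exact delayIndicator_mul_delayIndicator_eq_zero_of_lt hval hjk hj'm h heq ω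
  · rw [mul_comm]
    exact delayIndicator_mul_delayIndicator_eq_zero_of_lt hval hj'm hjk h heq.symm ω

end DelayIndicator

theorem modifiedNoise_uncorrelated_across_time_general
    {Ω : Type*} [MeasurableSpace Ω] (P : Measure Ω)
    (n N k m : ℕ) (hNk : N ≤ k) (hNm : N ≤ m) (hkm : k ≠ m)
    (α : ℕ → ℕ → Ω → ℝ)
    (v : ℕ → Ω → EuclideanSpace ℝ (Fin n))
    (hαmeas : ∀ a b, Measurable (α a b))
    (hval : ∀ a b ω, α a b ω = 0 ∨ α a b ω = 1)
    (hvmeas : ∀ p, Measurable (v p))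
    (hv2 : ∀ p i, MemLp (fun ω => v p ω i) 2 P)
    (hvuncorr : ∀ p q, p ≠ q → secondMomentMatrix P (v p) (v q) = 0)
    (hindep : Indep (⨆ a, ⨆ b, MeasurableSpace.comap (α a b) inferInstance)
      (⨆ p, MeasurableSpace.comap (v p) inferInstance) P) :
    secondMomentMatrix P (modifiedNoise α v N k) (modifiedNoise α v N m) = 0 := by
  have hαmα : ∀ a b, Measurable[⨆ a, ⨆ b, MeasurableSpace.comap (α a b) inferInstance] (α a b) :=
    fun a b => measurable_iff_comap_le.mpr (le_iSup_of_le a (le_iSup_of_le b le_rfl))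
  have hvmv : ∀ p, Measurable[⨆ p, MeasurableSpace.comap (v p) inferInstance] (v p) :=
    fun p => measurable_iff_comap_le.mpr (le_iSup_of_le p le_rfl)
  have hmα := iSup₂_le fun a b => (hαmeas a b).comap_le
  have hmv := iSup_le fun p => (hvmeas p).comap_le
  have hν : modifiedNoise α v N = fun k ω =>
      ∑ j ∈ range (N + 1), delayIndicator α k j ω • v (k - j) ω := rfl
  rw [hν, secondMomentMatrix_sum_smul_sum_smul_of_indep hmα hmv hindep _ _
    (Measurable.delayIndicator hαmα k) (Measurable.delayIndicator hαmα m)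
    (norm_delayIndicator_le_one hval k) (norm_delayIndicator_le_one hval m)
    (fun j => hvmv (k - j)) (fun j => hvmv (m - j)) (fun j => hv2 (k - j)) (fun j => hv2 (m - j))]
  refine Finset.sum_eq_zero fun j hj => Finset.sum_eq_zero fun j' hj' => ?_
  rw [Finset.mem_range] at hj hj'
  by_cases hsame : k - j = m - j'
  · simp [delayIndicator_mul_delayIndicator_eq_zero hval (by omega) (by omega) hkm hsame]
  · rw [hvuncorr _ _ hsame, smul_zero]

/-- Appendix A, Cases I, II and IV: the modified measurement noise
sequence of the delayed-measurement model is uncorrelated across distinct times: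
`E[ν_k ν_mᵀ] = 0` for `k ≠ m`, whenever the original noises are centred, mutually
uncorrelated and independent (as a family) of the `{0,1}`-valued family `α`. -/
theorem modifiedNoise_uncorrelated_across_time
    {Ω : Type*} [MeasurableSpace Ω] (P : Measure Ω) [IsProbabilityMeasure P]
    (n N k m : ℕ) (hNk : N ≤ k) (hNm : N ≤ m) (hkm : k ≠ m)
    (α : ℕ → ℕ → Ω → ℝ)
    (v : ℕ → Ω → EuclideanSpace ℝ (Fin n))
    (hαmeas : ∀ a b, Measurable (α a b))
    (hval : ∀ a b ω, α a b ω = 0 ∨ α a b ω = 1)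
    (hvmeas : ∀ p, Measurable (v p))
    (hv2 : ∀ p i, MemLp (fun ω => v p ω i) 2 P)
    (hvmean : ∀ p, ∫ ω, v p ω ∂P = 0)
    (hvuncorr : ∀ p q, p ≠ q → secondMomentMatrix P (v p) (v q) = 0)
    (hindep : Indep (⨆ a, ⨆ b, MeasurableSpace.comap (α a b) inferInstance)
      (⨆ p, MeasurableSpace.comap (v p) inferInstance) P) :
    secondMomentMatrix P (modifiedNoise α v N k) (modifiedNoise α v N m) = 0 :=
  modifiedNoise_uncorrelated_across_time_general P n N k m hNk hNm hkm α v hαmeas hval hvmeas hv2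
    hvuncorr hindep
end
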